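/- arXiv:1607.00248 — 3 statements merged into one kernel-verified Lean document; each statement's English description precedes it below -/
import Mathlib

section
/- If G is a graph without isolated vertices, then the Grundy domination number of G is at most the edge clique cover number of G, i.e., γ_gr(G) ≤ θ_e(G). -/
/-
Fix an edge clique cover `C` and a legal sequence `(v₁, …, v_k)`. Legality gives for each `i`
a vertex `u_i ∈ N[v_i]` outside `N[v_j]` for all `j < i`; since `v_i` is not isolated, some
clique `Q_i ∈ C` contains both `v_i` and `u_i`. If `Q_i = Q_j` with `i < j`, then `u_j` lies in
the clique `Q_i ∋ v_i`, so `u_j ∈ N[v_i]`, contradicting legality. Hence `i ↦ Q_i` is injective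
and `k ≤ |C|`.
-/

open SimpleGraph

/-- The closed neighborhood of a vertex. -/
def closedNbhd {V : Type*} (G : SimpleGraph V) (v : V) : Set V :=
  insert v (G.neighborSet v)

/-- A legal (closed neighborhood) sequence: distinct vertices, each dominating
a vertex not dominated by its predecessors. -/
def IsLegalSeq {V : Type*} (G : SimpleGraph V) (l : List V) : Prop :=
  l.Nodup ∧ ∀ i : Fin l.length, ∃ u, u ∈ closedNbhd G (l.get i) ∧
    ∀ j : Fin l.length, (j : ℕ) < (i : ℕ) → u ∉ closedNbhd G (l.get j)

/-- A dominating sequence: a legal sequence whose vertex set dominates the graph. -/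
def IsDomSeq {V : Type*} (G : SimpleGraph V) (l : List V) : Prop :=
  IsLegalSeq G l ∧ ∀ v : V, ∃ u ∈ l, v ∈ closedNbhd G u

/-- The Grundy domination number: maximum length of a dominating sequence. -/
noncomputable def grundyDomNum {V : Type*} (G : SimpleGraph V) : ℕ :=
  sSup {n | ∃ l : List V, IsDomSeq G l ∧ l.length = n}

/-- A legal open neighborhood sequence. -/
def IsLegalOpenSeq {V : Type*} (G : SimpleGraph V) (l : List V) : Prop :=
  l.Nodup ∧ ∀ i : Fin l.length, ∃ u, u ∈ G.neighborSet (l.get i) ∧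
    ∀ j : Fin l.length, (j : ℕ) < (i : ℕ) → u ∉ G.neighborSet (l.get j)

/-- A total dominating sequence. -/
def IsTotalDomSeq {V : Type*} (G : SimpleGraph V) (l : List V) : Prop :=
  IsLegalOpenSeq G l ∧ ∀ v : V, ∃ u ∈ l, v ∈ G.neighborSet u

/-- The Grundy total domination number. -/
noncomputable def grundyTotalDomNum {V : Type*} (G : SimpleGraph V) : ℕ :=
  sSup {n | ∃ l : List V, IsTotalDomSeq G l ∧ l.length = n}

/-- The edge clique cover number: minimum size of a family of cliques covering all edges. -/
noncomputable def edgeCliqueCoverNum {V : Type*} (G : SimpleGraph V) : ℕ :=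
  sInf {n | ∃ C : Finset (Set V), C.card = n ∧ (∀ Q ∈ C, G.IsClique Q) ∧
    ∀ u v : V, G.Adj u v → ∃ Q ∈ C, u ∈ Q ∧ v ∈ Q}

/-- The independence number. -/
noncomputable def indepNum {V : Type*} (G : SimpleGraph V) : ℕ :=
  sSup {n | ∃ s : Finset V, (s : Set V).Pairwise (fun u v => ¬ G.Adj u v) ∧ s.card = n}

/-- The lexicographic product of simple graphs. -/
def lexProd {V W : Type*} (G : SimpleGraph V) (H : SimpleGraph W) : SimpleGraph (V × W) where
  Adj x y := G.Adj x.1 y.1 ∨ (x.1 = y.1 ∧ H.Adj x.2 y.2)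
  symm := by
    constructor
    rintro x y (h | ⟨e, h⟩)
    · exact Or.inl h.symm
    · exact Or.inr ⟨e.symm, h.symm⟩
  loopless := by
    constructor
    rintro x (h | ⟨_, h⟩)
    · exact G.loopless.irrefl _ h
    · exact H.loopless.irrefl _ h

/-- The strong product of simple graphs. -/
def strongProd {V W : Type*} (G : SimpleGraph V) (H : SimpleGraph W) : SimpleGraph (V × W) where
  Adj x y := x ≠ y ∧ (x.1 = y.1 ∨ G.Adj x.1 y.1) ∧ (x.2 = y.2 ∨ H.Adj x.2 y.2)
  symm := by
    constructor
    rintro x y ⟨hne, h1, h2⟩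
    refine ⟨hne.symm, ?_, ?_⟩
    · rcases h1 with h | h
      · exact Or.inl h.symm
      · exact Or.inr h.symm
    · rcases h2 with h | h
      · exact Or.inl h.symm
      · exact Or.inr h.symm
  loopless := ⟨fun x h => h.1 rfl⟩

/-- The direct (tensor) product of simple graphs. -/
def directProd {V W : Type*} (G : SimpleGraph V) (H : SimpleGraph W) : SimpleGraph (V × W) where
  Adj x y := G.Adj x.1 y.1 ∧ H.Adj x.2 y.2
  symm := ⟨fun _ _ h => ⟨h.1.symm, h.2.symm⟩⟩
  loopless := ⟨fun x h => G.loopless.irrefl _ h.1⟩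

/-- The boundary of a set of vertices. -/
def boundarySet {V : Type*} (G : SimpleGraph V) (S : Set V) : Set V :=
  {u | u ∉ S ∧ ∃ s ∈ S, G.Adj u s}

/-- `aVal G l` is the number of entries of `l` not adjacent to any earlier entry. -/
def aVal {V : Type*} (G : SimpleGraph V) [DecidableRel G.Adj] (l : List V) : ℕ :=
  (Finset.univ.filter (fun i : Fin l.length =>
    ∀ j : Fin l.length, (j : ℕ) < (i : ℕ) → ¬ G.Adj (l.get j) (l.get i))).card

def IsEdgeCliqueCover {V : Type*} (G : SimpleGraph V) (C : Finset (Set V)) : Prop :=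
  (∀ Q ∈ C, G.IsClique Q) ∧ ∀ u v : V, G.Adj u v → ∃ Q ∈ C, u ∈ Q ∧ v ∈ Q

section

variable {V : Type*} {G : SimpleGraph V}

theorem mem_closedNbhd_of_mem_clique {Q : Set V} (hQ : G.IsClique Q) {u v : V}
    (hv : v ∈ Q) (hu : u ∈ Q) : u ∈ closedNbhd G v := by
  by_cases huv : u = v
  · exact huv ▸ Set.mem_insert u _
  · exact Set.mem_insert_of_mem _ (hQ hv hu (Ne.symm huv))

theorem IsEdgeCliqueCover.exists_mem_mem_of_mem_closedNbhd {C : Finset (Set V)}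
    (hC : IsEdgeCliqueCover G C) {u v : V} (hv : ∃ w, G.Adj v w) (hu : u ∈ closedNbhd G v) :
    ∃ Q ∈ C, v ∈ Q ∧ u ∈ Q := by
  rcases Set.mem_insert_iff.mp hu with rfl | hadj
  · obtain ⟨w, hw⟩ := hv
    obtain ⟨Q, hQC, huQ, -⟩ := hC.2 u w hw
    exact ⟨Q, hQC, huQ, huQ⟩
  · exact hC.2 v u hadj

theorem IsLegalSeq.length_le_card {l : List V} (hl : IsLegalSeq G l) {C : Finset (Set V)}
    (hC : IsEdgeCliqueCover G C) (hG : ∀ v ∈ l, ∃ u, G.Adj v u) :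
    l.length ≤ C.card := by
  choose u hu hnew using hl.2
  choose Q hQC hvQ huQ using fun i => hC.exists_mem_mem_of_mem_closedNbhd (hG _ (l.get_mem i)) (hu i)
  have hQ_inj : Function.Injective Q := by
    refine Function.Injective.of_lt_imp_ne fun i j hij hQij => hnew j i hij ?_
    exact mem_closedNbhd_of_mem_clique (hC.1 _ (hQC i)) (hvQ i) (hQij ▸ huQ j)
  simpa using Finset.card_le_card_of_injOn (s := Finset.univ) Q (fun i _ => hQC i) hQ_inj.injOn

theorem exists_isEdgeCliqueCover_card_eq_edgeCliqueCoverNum [Finite V] :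
    ∃ C : Finset (Set V), C.card = edgeCliqueCoverNum G ∧ IsEdgeCliqueCover G C := by
  classical
  have := Fintype.ofFinite V
  let pairs : Finset (Set V) := (Finset.univ.filter fun p : V × V => G.Adj p.1 p.2).image
    fun p => {p.1, p.2}
  have hpairs : IsEdgeCliqueCover G pairs := by
    refine ⟨?_, fun u v huv => ⟨{u, v},
      Finset.mem_image.mpr ⟨(u, v), by simpa using huv, rfl⟩, by simp, by simp⟩⟩
    simp only [pairs, Finset.mem_image, Finset.mem_filter, Finset.mem_univ, true_and]
    rintro _ ⟨p, hp, rfl⟩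
    exact isClique_pair.mpr fun _ => hp
  exact Nat.sInf_mem (s := {n | ∃ C : Finset (Set V), C.card = n ∧ IsEdgeCliqueCover G C})
    ⟨_, pairs, rfl, hpairs⟩

end

theorem stmt_0 {V : Type*} [Fintype V] (G : SimpleGraph V)
    (h : ∀ v : V, ∃ u : V, G.Adj v u) :
    grundyDomNum G ≤ edgeCliqueCoverNum G := by
  obtain ⟨C, hCcard, hC⟩ := exists_isEdgeCliqueCover_card_eq_edgeCliqueCoverNum (G := G)
  refine csSup_le' ?_
  rintro _ ⟨l, hl, rfl⟩
  exact hCcard ▸ hl.1.length_le_card hC fun v _ => h v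
end

section
/- For complete graphs with m, n ≥ 3, the Grundy domination number of the Cartesian product satisfies γ_gr(K_n □ K_m) ≥ n + m − 2. -/
open SimpleGraph

section

variable {V : Type*} {G : SimpleGraph V}

/-- `f v` is the vertex newly dominated by `v`. Distinctness of the entries comes for free: a
repeated entry's `f`-value would already be dominated by its first occurrence. -/
lemma isLegalSeq_of_pairwise {l : List V} (f : V → V) (hf : ∀ v, f v ∈ closedNbhd G v)
    (hl : l.Pairwise fun w v => f v ∉ closedNbhd G w) : IsLegalSeq G l := by
  refine ⟨hl.imp ?_, fun i =>
    ⟨f (l.get i), hf _, fun j hji => List.pairwise_iff_get.mp hl j i hji⟩⟩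
  rintro v _ h rfl
  exact h (hf v)

lemma IsDomSeq.length_le_grundyDomNum [Finite V] {l : List V} (hl : IsDomSeq G l) :
    l.length ≤ grundyDomNum G := by
  have := Fintype.ofFinite V
  refine le_csSup ⟨Fintype.card V, ?_⟩ ⟨l, hl, rfl⟩
  rintro k ⟨l', hl', rfl⟩
  exact hl'.1.1.length_le_card

end

section

variable {α β : Type*}

lemma mem_closedNbhd_boxProd_top {u v : α × β} :
    u ∈ closedNbhd ((⊤ : SimpleGraph α) □ (⊤ : SimpleGraph β)) v ↔ u.1 = v.1 ∨ u.2 = v.2 := by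
  obtain ⟨a, b⟩ := u
  obtain ⟨a', b'⟩ := v
  simp only [closedNbhd, Set.mem_insert_iff, mem_neighborSet, boxProd_adj, top_adj,
    Prod.mk.injEq]
  tauto

/-- With `a₀ ≠ a₁` and `b₀ ≠ b₁`, list the vertices `(a, b₀)` with `a ≠ a₁`, then the vertices
`(a₀, b)` with `b ≠ b₀`. The first kind newly dominates `(a, b₁)`, the second `(a₁, b)`. -/
lemma exists_isDomSeq_boxProd_top [Fintype α] [Fintype β] [Nontrivial α] [Nontrivial β] :
    ∃ l : List (α × β), IsDomSeq ((⊤ : SimpleGraph α) □ (⊤ : SimpleGraph β)) l ∧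
      l.length = Fintype.card α - 1 + (Fintype.card β - 1) := by
  classical
  obtain ⟨a₀, a₁, ha⟩ := exists_pair_ne α
  obtain ⟨b₀, b₁, hb⟩ := exists_pair_ne β
  let rows := (Finset.univ.erase a₁).toList
  let cols := (Finset.univ.erase b₀).toList
  let f : α × β → α × β := fun v => if v.2 = b₀ then (v.1, b₁) else (a₁, v.2)
  refine ⟨rows.map (·, b₀) ++ cols.map (a₀, ·), ⟨?_, ?_⟩, ?_⟩
  · refine isLegalSeq_of_pairwise f (fun v => ?_) ?_
    · rw [mem_closedNbhd_boxProd_top]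
      by_cases hv : v.2 = b₀ <;> simp [f, hv]
    simp only [List.pairwise_append, List.pairwise_map, List.mem_map,
      mem_closedNbhd_boxProd_top]
    refine ⟨(Finset.nodup_toList _).pairwise_of_forall_ne ?_,
      (Finset.nodup_toList _).pairwise_of_forall_ne ?_, ?_⟩
    · intro a _ a' _ h
      simp [f, Ne.symm h, Ne.symm hb]
    · intro b _ b' hb' h
      simp only [Finset.mem_toList, Finset.mem_erase] at hb'
      simp [f, hb'.1, Ne.symm ha, Ne.symm h]
    · rintro _ ⟨a, hrow, rfl⟩ _ ⟨b, hcol, rfl⟩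
      simp only [rows, cols, Finset.mem_toList, Finset.mem_erase] at hrow hcol
      simp [f, hcol.1, Ne.symm hrow.1]
  · rintro ⟨a, b⟩
    by_cases hb₀ : b = b₀
    · exact ⟨(a₀, b₀), by simp [rows, ha], mem_closedNbhd_boxProd_top.mpr (Or.inr hb₀)⟩
    · exact ⟨(a₀, b), by simp [cols, hb₀], mem_closedNbhd_boxProd_top.mpr (Or.inr rfl)⟩
  · simp [rows, cols, Finset.card_erase_of_mem]

lemma card_add_card_sub_two_le_grundyDomNum_boxProd_top [Fintype α] [Fintype β] [Nontrivial α]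
    [Nontrivial β] : Fintype.card α + Fintype.card β - 2 ≤
      grundyDomNum ((⊤ : SimpleGraph α) □ (⊤ : SimpleGraph β)) := by
  obtain ⟨l, hl, hlen⟩ := exists_isDomSeq_boxProd_top (α := α) (β := β)
  have := Fintype.one_lt_card (α := α)
  have := Fintype.one_lt_card (α := β)
  have := hl.length_le_grundyDomNum
  omega

end

theorem stmt_2 (n m : ℕ) (hn : 3 ≤ n) (hm : 3 ≤ m) :
    grundyDomNum ((⊤ : SimpleGraph (Fin n)) □ (⊤ : SimpleGraph (Fin m))) ≥ n + m - 2 := by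
  have : Nontrivial (Fin n) := Fin.nontrivial_iff_two_le.mpr (by omega)
  have : Nontrivial (Fin m) := Fin.nontrivial_iff_two_le.mpr (by omega)
  simpa using card_add_card_sub_two_le_grundyDomNum_boxProd_top (α := Fin n) (β := Fin m)
end

section
/- For any graphs G and H, γ_gr(G ⊠ H) ≤ min{|V(G)|·γ_gr(H), γ_gr(G)·|V(H)|}. -/
open SimpleGraph

/-!
Closed neighbourhoods in `G ⊠ H` are products of closed neighbourhoods. Hence the entries of a
legal sequence of `G ⊠ H` lying in a layer `{g} × V(H)` project to a legal sequence of `H`, and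
a legal sequence of a finite graph extends to a dominating one, so each layer holds at most
`γ_gr(H)` entries. Summing over the `|V(G)|` layers gives the first bound; swapping the factors,
the second.
-/

section

variable {α β ι : Type*}

lemma List.sum_length_filter_eq_length [Fintype ι] [DecidableEq ι] (f : α → ι) (l : List α) :
    ∑ i, (l.filter (f · = i)).length = l.length := by
  induction l with
  | nil => simp
  | cons x l ih =>
    have hcons : ∀ i, ((x :: l).filter (f · = i)).length =
        (l.filter (f · = i)).length + if f x = i then 1 else 0 := fun i => by
      by_cases h : f x = i <;> simp [h]
    simp [hcons, Finset.sum_add_distrib, ih]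

lemma mem_closedNbhd_iff (G : SimpleGraph α) (x v : α) :
    x ∈ closedNbhd G v ↔ x = v ∨ G.Adj v x :=
  Set.mem_insert_iff

lemma self_mem_closedNbhd (G : SimpleGraph α) (v : α) : v ∈ closedNbhd G v :=
  Set.mem_insert _ _

lemma mem_closedNbhd_strongProd (G : SimpleGraph α) (H : SimpleGraph β) (x v : α × β) :
    x ∈ closedNbhd (strongProd G H) v ↔ x.1 ∈ closedNbhd G v.1 ∧ x.2 ∈ closedNbhd H v.2 := by
  simp only [mem_closedNbhd_iff, strongProd]
  by_cases hx : x = v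
  · subst hx; simp
  · simp [hx, eq_comm]

section Legal

variable {G : SimpleGraph α} {l : List α}

lemma IsLegalSeq.append_singleton (hl : IsLegalSeq G l) {v : α}
    (hv : ∀ w ∈ l, v ∉ closedNbhd G w) : IsLegalSeq G (l ++ [v]) := by
  have hvl : v ∉ l := fun h => hv v h (self_mem_closedNbhd G v)
  refine ⟨hl.1.append (List.nodup_singleton v) (by simpa using hvl), fun i => ?_⟩
  have hget : ∀ j : Fin (l ++ [v]).length, (hj : (j : ℕ) < l.length) →
      (l ++ [v]).get j = l.get ⟨j, hj⟩ := fun j hj => List.getElem_append_left hj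
  rcases (Nat.lt_succ_iff.mp (by simpa using i.2) : (i : ℕ) ≤ l.length).lt_or_eq with hi | hi
  · obtain ⟨u, hu, hfresh⟩ := hl.2 ⟨i, hi⟩
    refine ⟨u, by rwa [hget i hi], fun j hj => ?_⟩
    rw [hget j (hj.trans hi)]
    exact hfresh _ hj
  · have hlast : (l ++ [v]).get i = v := by simp [hi]
    refine ⟨v, by rw [hlast]; exact self_mem_closedNbhd G v, fun j hj => ?_⟩
    rw [hget j (hi ▸ hj)]
    exact hv _ (List.get_mem _ _)

-- `l` is bound here rather than taken from the section so that the recursive call may change it.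
lemma IsLegalSeq.exists_isDomSeq_length_le [Fintype α] {l : List α} (hl : IsLegalSeq G l) :
    ∃ l', IsDomSeq G l' ∧ l.length ≤ l'.length := by
  by_cases hdom : ∀ v, ∃ w ∈ l, v ∈ closedNbhd G w
  · exact ⟨l, ⟨hl, hdom⟩, le_rfl⟩
  push Not at hdom
  obtain ⟨v, hv⟩ := hdom
  have hlv := hl.append_singleton hv
  have : Fintype.card α - (l ++ [v]).length < Fintype.card α - l.length := by
    have := hlv.1.length_le_card
    simp only [List.length_append, List.length_singleton] at this ⊢
    omega
  obtain ⟨l', hdom', hle⟩ := hlv.exists_isDomSeq_length_le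
  exact ⟨l', hdom', by simp only [List.length_append] at hle; omega⟩
termination_by Fintype.card α - l.length

lemma bddAbove_domSeq_lengths [Fintype α] (G : SimpleGraph α) :
    BddAbove {n | ∃ l : List α, IsDomSeq G l ∧ l.length = n} :=
  ⟨Fintype.card α, by rintro _ ⟨l, hl, rfl⟩; exact hl.1.1.length_le_card⟩

lemma IsLegalSeq.length_le_grundyDomNum [Fintype α] (hl : IsLegalSeq G l) :
    l.length ≤ grundyDomNum G := by
  obtain ⟨l', hdom, hle⟩ := hl.exists_isDomSeq_length_le
  exact hle.trans (le_csSup (bddAbove_domSeq_lengths G) ⟨l', hdom, rfl⟩)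

lemma IsLegalSeq.map_of_sublist {H : SimpleGraph β} {m : List α} (hl : IsLegalSeq G l)
    (hm : m.Sublist l) (f : α → β) (hf : Set.InjOn f {x | x ∈ m})
    (hfoot : ∀ x ∈ m, ∀ u ∈ closedNbhd G x, ∃ u' ∈ closedNbhd H (f x),
      ∀ y ∈ m, u' ∈ closedNbhd H (f y) → u ∈ closedNbhd G y) :
    IsLegalSeq H (m.map f) := by
  obtain ⟨e, he⟩ := List.sublist_iff_exists_fin_orderEmbedding_get_eq.mp hm
  refine ⟨(hl.1.sublist hm).map_on fun x hx y hy => hf hx hy, fun i => ?_⟩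
  have hlen : (m.map f).length = m.length := List.length_map _
  obtain ⟨u, hu, hfresh⟩ := hl.2 (e (Fin.cast hlen i))
  rw [← he] at hu
  obtain ⟨u', hu', hback⟩ := hfoot _ (List.get_mem _ _) u hu
  refine ⟨u', by simpa using hu', fun j hj hj' => ?_⟩
  have hlt : Fin.cast hlen j < Fin.cast hlen i := hj
  refine hfresh (e (Fin.cast hlen j)) (e.strictMono hlt) ?_
  rw [← he]
  exact hback _ (List.get_mem _ _) (by simpa using hj')

end Legal

section StrongProduct

variable {G : SimpleGraph α} {H : SimpleGraph β} {l : List (α × β)}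

lemma IsLegalSeq.map_swap_strongProd (hl : IsLegalSeq (strongProd G H) l) :
    IsLegalSeq (strongProd H G) (l.map Prod.swap) := by
  refine hl.map_of_sublist (List.Sublist.refl l) Prod.swap Prod.swap_injective.injOn
    fun x _ u hu => ⟨u.swap, ?_, fun y _ hy => ?_⟩
  · rw [mem_closedNbhd_strongProd] at hu ⊢
    exact hu.symm
  · rw [mem_closedNbhd_strongProd] at hy ⊢
    exact hy.symm

lemma IsLegalSeq.filter_fst_map_snd [DecidableEq α] (hl : IsLegalSeq (strongProd G H) l)
    (g : α) : IsLegalSeq H ((l.filter (·.1 = g)).map Prod.snd) := by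
  have hfst : ∀ x ∈ l.filter (·.1 = g), x.1 = g := fun x hx => by
    simpa using List.of_mem_filter hx
  refine hl.map_of_sublist List.filter_sublist Prod.snd
    (fun x hx y hy hxy => Prod.ext ((hfst x hx).trans (hfst y hy).symm) hxy)
    fun x hx u hu => ?_
  rw [mem_closedNbhd_strongProd] at hu
  refine ⟨u.2, hu.2, fun y hy hy' => (mem_closedNbhd_strongProd G H u y).2 ⟨?_, hy'⟩⟩
  rw [hfst y hy, ← hfst x hx]
  exact hu.1

lemma IsLegalSeq.length_le_card_mul_grundyDomNum [Fintype α] [Fintype β]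
    (hl : IsLegalSeq (strongProd G H) l) : l.length ≤ Fintype.card α * grundyDomNum H := by
  classical
  calc l.length = ∑ g : α, ((l.filter (·.1 = g)).map Prod.snd).length := by
        simp only [List.length_map, List.sum_length_filter_eq_length]
    _ ≤ ∑ _g : α, grundyDomNum H :=
        Finset.sum_le_sum fun g _ => (hl.filter_fst_map_snd g).length_le_grundyDomNum
    _ = Fintype.card α * grundyDomNum H := by simp

end StrongProduct

end

theorem stmt_18 {V W : Type*} [Fintype V] [Fintype W]
    (G : SimpleGraph V) (H : SimpleGraph W) :
    grundyDomNum (strongProd G H) ≤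
      min (Fintype.card V * grundyDomNum H) (grundyDomNum G * Fintype.card W) := by
  refine le_min (csSup_le' ?_) (csSup_le' ?_) <;> rintro _ ⟨l, hl, rfl⟩
  · exact hl.1.length_le_card_mul_grundyDomNum
  · simpa [mul_comm] using hl.1.map_swap_strongProd.length_le_card_mul_grundyDomNum
end
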